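/- arXiv:1406.0885 — 2 statements merged into one kernel-verified Lean document; each statement's English description precedes it below -/
import Mathlib

section
/- Let ω : [0,T] → ℝ be continuous with ω(0) = 0, let b < 0 < b̄ and b < K₂ < K₁ < b̄. Define α₁ = 1/(b̄−K₁), α₂ = 1/(K₂−b), β₁ = α₁, β₂ = α₂, β₃ = α₁+α₂. Then the indicator of the event {sup ω < b̄ or inf ω ≤ b} is bounded above by α₂(K₂−ω(T))⁺ + α₁(K₁−ω(T))⁺ + 1_{ω(T) < b̄} − α₁(ω(T)−b̄)⁺ + β₁(ω(T)−b̄)·1_{H_{b̄} < H_b ∧ T} + β₂(ω(T)−b)·1_{H_{b̄} < H_b ≤ T} + β₃(ω(T)−b)·1_{H_b < H_{b̄} ∧ T}. -/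
open Set

noncomputable def pos (x : ℝ) : ℝ := max x 0

open Classical in
noncomputable def ind (P : Prop) : ℝ := if P then 1 else 0

/-- First hitting time (before time `T`) of level `x` by the path `ω`, valued in `EReal`
(`⊤` if the level is not hit in `[0,T]`). -/
noncomputable def hit (ω : ℝ → ℝ) (T x : ℝ) : EReal :=
  sInf {s : EReal | ∃ t : ℝ, s = (t : EReal) ∧ 0 ≤ t ∧ t ≤ T ∧ ω t = x}

/-! The right-hand side is `upperLeg K₁ ub lb (ω T) …`, which dominates `1{sup ω < ub}`, plus
`lowerLeg K₂ lb (ω T) …`, which dominates `1{inf ω ≤ lb}`; their sum dominates the indicator of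
the union. Each domination is a case analysis on which barrier is hit first, and whether before `T`.
The only path property needed is the intermediate value theorem: as `ω 0 = 0` lies between the
barriers, `ω T > ub` forces a barrier to be hit strictly before `T`, and `inf ω ≤ lb` forces `lb`
to be hit. -/

section Indicator

lemma ind_pos {P : Prop} (h : P) : ind P = 1 := if_pos h

lemma ind_neg {P : Prop} (h : ¬P) : ind P = 0 := if_neg h

lemma ind_nonneg (P : Prop) : 0 ≤ ind P := by
  unfold ind; split_ifs <;> norm_num

lemma ind_le_ind {P Q : Prop} (h : P → Q) : ind P ≤ ind Q := by
  by_cases hP : P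
  · rw [ind_pos hP, ind_pos (h hP)]
  · rw [ind_neg hP]; exact ind_nonneg Q

lemma ind_or_le (P Q : Prop) : ind (P ∨ Q) ≤ ind P + ind Q := by
  by_cases hP : P
  · rw [ind_pos (Or.inl hP), ind_pos hP]; linarith [ind_nonneg Q]
  · rw [ind_neg hP, zero_add]; exact ind_le_ind (Or.resolve_left · hP)

end Indicator

section Payoff

/-- Puts struck at `c`, a digital put and short calls struck at `u`, and forwards entered when `u`
(on `I₁`) or `l` (on `I₃`) is hit first, before maturity. -/
noncomputable def upperLeg (c u l x : ℝ) (I₁ I₃ : Prop) : ℝ :=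
  1 / (u - c) * pos (c - x) + ind (x < u) - 1 / (u - c) * pos (x - u) +
    1 / (u - c) * (x - u) * ind I₁ + 1 / (u - c) * (x - l) * ind I₃

/-- Puts struck at `c` and forwards entered when `l` is hit, after (on `I₂`) or before (on `I₃`)
the other barrier. -/
noncomputable def lowerLeg (c l x : ℝ) (I₂ I₃ : Prop) : ℝ :=
  1 / (c - l) * pos (c - x) + 1 / (c - l) * (x - l) * ind I₂ + 1 / (c - l) * (x - l) * ind I₃

variable {c u l x : ℝ}

lemma pos_of_nonpos {y : ℝ} (h : y ≤ 0) : pos y = 0 := max_eq_right h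

lemma pos_of_nonneg {y : ℝ} (h : 0 ≤ y) : pos y = y := max_eq_left h

lemma le_pos (y : ℝ) : y ≤ pos y := le_max_left _ _

lemma pos_nonneg (y : ℝ) : 0 ≤ pos y := le_max_right _ _

lemma one_le_put_add_forward (hlc : l < c) (x : ℝ) :
    1 ≤ 1 / (c - l) * pos (c - x) + 1 / (c - l) * (x - l) := by
  have hcl : 0 < c - l := by linarith
  have hput := mul_le_mul_of_nonneg_left (le_pos (c - x)) (one_div_pos.2 hcl).le
  linarith [one_div_mul_cancel hcl.ne']

lemma put_add_digital_add_forward_nonneg (hcu : c < u) (x : ℝ) :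
    0 ≤ 1 / (u - c) * pos (c - x) + ind (x < u) - 1 / (u - c) * pos (x - u) +
      1 / (u - c) * (x - u) := by
  have huc : 0 < u - c := by linarith
  have hput := mul_le_mul_of_nonneg_left (le_pos (c - x)) (one_div_pos.2 huc).le
  by_cases hx : x < u
  · rw [ind_pos hx, pos_of_nonpos (by linarith : x - u ≤ 0)]
    linarith [one_div_mul_cancel huc.ne']
  · rw [ind_neg hx, pos_of_nonneg (by linarith : 0 ≤ x - u)]
    linarith [mul_nonneg (one_div_pos.2 huc).le (pos_nonneg (c - x))]

lemma ind_lt_le_put_add_digital_add_forward (hcu : c < u) (hlc : l ≤ c) (x : ℝ) :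
    ind (x < u) ≤ 1 / (u - c) * pos (c - x) + ind (x < u) - 1 / (u - c) * pos (x - u) +
      1 / (u - c) * (x - l) := by
  have huc : 0 < u - c := by linarith
  have ha := (one_div_pos.2 huc).le
  by_cases hx : x < u
  · have hput := mul_le_mul_of_nonneg_left (le_pos (c - x)) ha
    rw [pos_of_nonpos (by linarith : x - u ≤ 0)]
    linarith [mul_nonneg ha (by linarith : 0 ≤ c - l)]
  · have hcall := put_add_digital_add_forward_nonneg hcu x
    rw [ind_neg hx] at hcall ⊢
    linarith [mul_nonneg ha (by linarith : 0 ≤ u - l)]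

lemma ind_le_upperLeg {P I₁ I₃ : Prop} (hcu : c < u) (hlc : l ≤ c) (hP : P → x < u)
    (hP₁ : I₁ → ¬P) (h₁₃ : ¬(I₁ ∧ I₃)) (hx : u < x → I₁ ∨ I₃) :
    ind P ≤ upperLeg c u l x I₁ I₃ := by
  unfold upperLeg
  by_cases h₁ : I₁
  · rw [ind_pos h₁, ind_neg (fun h₃ => h₁₃ ⟨h₁, h₃⟩), ind_neg (hP₁ h₁)]
    linarith [put_add_digital_add_forward_nonneg hcu x]
  have hP_le : ind P ≤ ind (x < u) := ind_le_ind hP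
  by_cases h₃ : I₃
  · rw [ind_neg h₁, ind_pos h₃]
    linarith [ind_lt_le_put_add_digital_add_forward hcu hlc x]
  · have hxu : x ≤ u := not_lt.1 fun h => (hx h).elim h₁ h₃
    rw [ind_neg h₁, ind_neg h₃, pos_of_nonpos (by linarith : x - u ≤ 0)]
    linarith [mul_nonneg (one_div_pos.2 (by linarith : 0 < u - c)).le (pos_nonneg (c - x))]

lemma ind_le_lowerLeg {Q I₂ I₃ : Prop} (hlc : l < c) (hQ : Q → x = l ∨ I₂ ∨ I₃)
    (h₂ : I₂ → Q) (h₃ : I₃ → Q) (h₂₃ : ¬(I₂ ∧ I₃)) :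
    ind Q ≤ lowerLeg c l x I₂ I₃ := by
  unfold lowerLeg
  have hput_nonneg := mul_nonneg (one_div_pos.2 (by linarith : 0 < c - l)).le (pos_nonneg (c - x))
  have hone := one_le_put_add_forward hlc x
  by_cases hq : Q
  · rw [ind_pos hq]
    rcases hQ hq with rfl | hI₂ | hI₃
    · linarith
    · rw [ind_pos hI₂, ind_neg fun hI₃ => h₂₃ ⟨hI₂, hI₃⟩]
      linarith
    · rw [ind_neg fun hI₂ => h₂₃ ⟨hI₂, hI₃⟩, ind_pos hI₃]
      linarith
  · rw [ind_neg hq, ind_neg (mt h₂ hq), ind_neg (mt h₃ hq)]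
    linarith

end Payoff

section Hitting

variable {ω : ℝ → ℝ} {T x y t : ℝ}

lemma hit_le (ht : t ∈ Icc 0 T) (hx : ω t = x) : hit ω T x ≤ t :=
  sInf_le ⟨t, rfl, ht.1, ht.2, hx⟩

lemma hit_ne_top_iff : hit ω T x ≠ ⊤ ↔ x ∈ ω '' Icc 0 T := by
  constructor
  · intro h
    by_contra hx
    refine h (sInf_eq_top.2 ?_)
    rintro s ⟨t, rfl, ht0, htT, rfl⟩
    exact absurd ⟨t, ⟨ht0, htT⟩, rfl⟩ hx
  · rintro ⟨t, ht, rfl⟩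
    exact ((hit_le ht rfl).trans_lt (EReal.coe_lt_top t)).ne

lemma exists_hit_eq (hcont : ContinuousOn ω (Icc 0 T)) (h : hit ω T x ≠ ⊤) :
    ∃ t ∈ Icc 0 T, ω t = x ∧ hit ω T x = t := by
  set S := Icc 0 T ∩ ω ⁻¹' {x}
  have hS : IsCompact S := isCompact_Icc.of_isClosed_subset
    (hcont.preimage_isClosed_of_isClosed isClosed_Icc isClosed_singleton) inter_subset_left
  obtain ⟨t, ht, hx⟩ := hit_ne_top_iff.1 h
  have hmem : sInf S ∈ S := hS.sInf_mem ⟨t, ht, hx⟩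
  refine ⟨sInf S, hmem.1, hmem.2, le_antisymm (hit_le hmem.1 hmem.2) (le_sInf ?_)⟩
  rintro s ⟨t, rfl, ht0, htT, hxt⟩
  exact EReal.coe_le_coe_iff.2 (csInf_le hS.bddBelow ⟨⟨ht0, htT⟩, hxt⟩)

lemma apply_eq_of_hit_eq (hcont : ContinuousOn ω (Icc 0 T)) (h : hit ω T x = T) : ω T = x := by
  obtain ⟨t, -, hx, ht⟩ := exists_hit_eq hcont (h ▸ EReal.coe_ne_top T)
  obtain rfl : t = T := EReal.coe_injective (ht.symm.trans h)
  exact hx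

lemma hit_ne_hit (hcont : ContinuousOn ω (Icc 0 T)) (hxy : x ≠ y) (h : hit ω T x ≠ ⊤) :
    hit ω T x ≠ hit ω T y := by
  intro hxy'
  obtain ⟨t, -, hx, ht⟩ := exists_hit_eq hcont h
  obtain ⟨s, -, hy, hs⟩ := exists_hit_eq hcont (hxy' ▸ h)
  rw [ht, hs, EReal.coe_eq_coe_iff] at hxy'
  exact hxy (hx.symm.trans (hxy' ▸ hy))

lemma hit_lt_of_mem_uIcc (hcont : ContinuousOn ω (Icc 0 T)) (ht : t ∈ Icc 0 T)
    (hx : x ∈ uIcc (ω 0) (ω t)) (hne : ω t ≠ x) : hit ω T x < t := by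
  have hsub : uIcc 0 t ⊆ Icc 0 T := by
    rw [uIcc_of_le ht.1]; exact Icc_subset_Icc le_rfl ht.2
  obtain ⟨s, hs, rfl⟩ := intermediate_value_uIcc (hcont.mono hsub) hx
  rw [uIcc_of_le ht.1] at hs
  have hst : s < t := hs.2.lt_of_ne fun h => hne (h ▸ rfl)
  exact (hit_le (hsub (by rwa [uIcc_of_le ht.1])) rfl).trans_lt (EReal.coe_lt_coe_iff.2 hst)

end Hitting

lemma lt_min_or_lt_min_of_ne {α : Type*} [LinearOrder α] {a b c : α} (hab : a ≠ b)
    (h : min a b < c) : a < min b c ∨ b < min a c := by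
  rcases hab.lt_or_gt with hab | hba
  · exact Or.inl (lt_min hab (by rwa [min_eq_left hab.le] at h))
  · exact Or.inr (lt_min hba (by rwa [min_eq_right hba.le] at h))

section Legs

variable {ω : ℝ → ℝ} {T lb ub c : ℝ}

lemma ind_sSup_lt_le_upperLeg (hT : 0 ≤ T) (hcont : ContinuousOn ω (Icc 0 T))
    (h0 : ω 0 ≤ ub) (hcu : c < ub) (hlc : lb ≤ c) :
    ind (sSup (ω '' Icc 0 T) < ub) ≤ upperLeg c ub lb (ω T)
      (hit ω T ub < min (hit ω T lb) T) (hit ω T lb < min (hit ω T ub) T) := by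
  have hT' : T ∈ Icc 0 T := ⟨hT, le_rfl⟩
  refine ind_le_upperLeg hcu hlc (hcont.le_sSup_image_Icc hT').trans_lt ?_ ?_ ?_
  · intro hfirst hsup
    obtain ⟨t, ht, hub⟩ := hit_ne_top_iff.1 (hfirst.trans_le (min_le_right _ _)).ne_top
    exact (hub ▸ hcont.le_sSup_image_Icc ht).not_gt hsup
  · exact fun h => (h.1.trans_le (min_le_left _ _)).asymm (h.2.trans_le (min_le_left _ _))
  · intro hub
    have hhit : hit ω T ub < T :=
      hit_lt_of_mem_uIcc hcont hT' ⟨by simp [h0], by simp [hub.le]⟩ hub.ne'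
    exact lt_min_or_lt_min_of_ne (hit_ne_hit hcont (hlc.trans_lt hcu).ne' hhit.ne_top)
      ((min_le_left _ _).trans_lt hhit)

lemma ind_sInf_le_le_lowerLeg (hT : 0 ≤ T) (hcont : ContinuousOn ω (Icc 0 T))
    (h0 : lb ≤ ω 0) (hlu : lb ≠ ub) (hlc : lb < c) :
    ind (sInf (ω '' Icc 0 T) ≤ lb) ≤ lowerLeg c lb (ω T)
      (hit ω T ub < hit ω T lb ∧ hit ω T lb ≤ T) (hit ω T lb < min (hit ω T ub) T) := by
  have hinf : hit ω T lb ≠ ⊤ → sInf (ω '' Icc 0 T) ≤ lb := fun h => by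
    obtain ⟨t, ht, hlb⟩ := hit_ne_top_iff.1 h
    exact hlb ▸ hcont.sInf_image_Icc_le ht
  refine ind_le_lowerLeg hlc ?_ (fun h => hinf (h.2.trans_lt (EReal.coe_lt_top T)).ne)
    (fun h => hinf h.ne_top) (fun h => h.1.1.asymm (h.2.trans_le (min_le_left _ _)))
  intro hlb
  have hmem : lb ∈ ω '' Icc 0 T := by
    rw [hcont.image_Icc hT]
    exact ⟨hlb, h0.trans (hcont.le_sSup_image_Icc ⟨le_rfl, hT⟩)⟩
  obtain ⟨t, ht, -, hhit⟩ := exists_hit_eq hcont (hit_ne_top_iff.2 hmem)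
  rcases ht.2.lt_or_eq with htT | rfl
  · rcases (hit_ne_hit hcont hlu (hit_ne_top_iff.2 hmem)).lt_or_gt with hlt | hgt
    · exact Or.inr (Or.inr (lt_min hlt (hhit ▸ EReal.coe_lt_coe_iff.2 htT)))
    · exact Or.inr (Or.inl ⟨hgt, hhit ▸ EReal.coe_le_coe_iff.2 ht.2⟩)
  · exact Or.inl (apply_eq_of_hit_eq hcont hhit)

end Legs

theorem stmt4 (T : ℝ) (hT : 0 < T) (ω : ℝ → ℝ)
    (hcont : ContinuousOn ω (Icc 0 T)) (hω0 : ω 0 = 0)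
    (lb ub K₁ K₂ : ℝ) (hlb : lb < 0) (hub : 0 < ub)
    (h1 : lb < K₂) (h2 : K₂ < K₁) (h3 : K₁ < ub) :
    ind (sSup (ω '' Icc 0 T) < ub ∨ sInf (ω '' Icc 0 T) ≤ lb) ≤
      (1 / (K₂ - lb)) * pos (K₂ - ω T) + (1 / (ub - K₁)) * pos (K₁ - ω T) +
        ind (ω T < ub) - (1 / (ub - K₁)) * pos (ω T - ub) +
        (1 / (ub - K₁)) * (ω T - ub) *
          ind (hit ω T ub < min (hit ω T lb) (T : EReal)) +
        (1 / (K₂ - lb)) * (ω T - lb) *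
          ind (hit ω T ub < hit ω T lb ∧ hit ω T lb ≤ (T : EReal)) +
        (1 / (ub - K₁) + 1 / (K₂ - lb)) * (ω T - lb) *
          ind (hit ω T lb < min (hit ω T ub) (T : EReal)) := by
  have hupper := ind_sSup_lt_le_upperLeg (lb := lb) hT.le hcont (hω0.trans_le hub.le) h3
    (by linarith)
  have hlower := ind_sInf_le_le_lowerLeg (ub := ub) hT.le hcont (hlb.le.trans_eq hω0.symm)
    (by linarith) h1
  unfold upperLeg at hupper
  unfold lowerLeg at hlower
  linear_combination
    ind_or_le (sSup (ω '' Icc 0 T) < ub) (sInf (ω '' Icc 0 T) ≤ lb) + hupper + hlower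
end

section
/- Let μ be a centred probability measure on ℝ with distribution function F, b < 0 < b̄, and let ξ solve ∫(x−b) dμ_{F(b)}^ξ = −b. Define the measure ν = [−b/(b̄−b) − (ξ − F(b))]·δ_b + μ_{F(b)}^ξ. Then ν has total mass −b/(b̄−b) and barycentre b̄, i.e. ∫(x−b̄) dν = 0. -/
open MeasureTheory Set

/-- Distribution function of `μ`. -/
noncomputable def distF (μ : Measure ℝ) (x : ℝ) : ℝ := (μ (Iic x)).toReal

/-- Left limit `F(x-)` of the distribution function. -/
noncomputable def distFm (μ : Measure ℝ) (x : ℝ) : ℝ := (μ (Iio x)).toReal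

/-- Quantile function of `μ`. -/
noncomputable def quantile (μ : Measure ℝ) (u : ℝ) : ℝ :=
  sInf {x : ℝ | u ≤ distF μ x}

/-- The sub-probability measure `μ_p^q`, i.e. `μ` restricted to its quantile range `(p,q]`,
realised as the image under the quantile function of Lebesgue measure on `(p,q]`. -/
noncomputable def qmeas (μ : Measure ℝ) (p q : ℝ) : Measure ℝ :=
  (volume.restrict (Ioc p q)).map (quantile μ)

/-- `m̃_p^q = ∫ x dμ_p^q`. -/
noncomputable def mtil (μ : Measure ℝ) (p q : ℝ) : ℝ :=
  ∫ u in Ioc p q, quantile μ u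

/-- The barycentre `m_p^q` of `μ` restricted to the quantile range `(p,q]`. -/
noncomputable def bary (μ : Measure ℝ) (p q : ℝ) : ℝ :=
  if p < q then (q - p)⁻¹ * mtil μ p q else quantile μ q

/-! The mass of `ν` is the Dirac weight plus the length `ξ - F(b)` of the quantile range of
`μ_{F(b)}^ξ`. For the barycentre write `x - b̄ = (x - b) + (b - b̄)`: the defining equation of `ξ`
makes the first part integrate to `-b`, and the second contributes `(b - b̄)` times the total mass
`-b / (b̄ - b)`, that is `b`. -/

open Filter ProbabilityTheory

lemma distF_eq_cdf (μ : Measure ℝ) [IsProbabilityMeasure μ] : distF μ = cdf μ := by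
  ext x
  rw [cdf_eq_real]
  rfl

lemma monotoneOn_quantile (μ : Measure ℝ) [IsProbabilityMeasure μ] :
    MonotoneOn (quantile μ) (Ioo 0 1) := by
  intro u hu v hv huv
  simp only [quantile, distF_eq_cdf]
  have hbdd : BddBelow {x | u ≤ cdf μ x} := by
    obtain ⟨x₀, hx₀⟩ := ((tendsto_cdf_atBot μ).eventually (eventually_lt_nhds hu.1)).exists
    exact ⟨x₀, fun y hy => le_of_not_gt fun hyx => (hy.trans ((cdf μ).mono hyx.le)).not_gt hx₀⟩
  have hne : {x | v ≤ cdf μ x}.Nonempty :=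
    (((tendsto_cdf_atTop μ).eventually (eventually_gt_nhds hv.2)).exists).imp fun _ => le_of_lt
  exact csInf_le_csInf hbdd hne fun x hx => huv.trans hx

section QuantileMeasure

variable (μ : Measure ℝ) [IsProbabilityMeasure μ] {p q : ℝ}

lemma aemeasurable_quantile_restrict_Ioc (hp : 0 ≤ p) (hq : q ≤ 1) :
    AEMeasurable (quantile μ) (volume.restrict (Ioc p q)) := by
  rw [← Measure.restrict_congr_set Ioo_ae_eq_Ioc]
  exact aemeasurable_restrict_of_monotoneOn measurableSet_Ioo <|
    (monotoneOn_quantile μ).mono fun u hu => ⟨hp.trans_lt hu.1, hu.2.trans_le hq⟩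

variable (hp : 0 ≤ p) (hq : q ≤ 1)
include hp hq

lemma qmeas_univ : qmeas μ p q univ = ENNReal.ofReal (q - p) := by
  rw [qmeas, Measure.map_apply_of_aemeasurable (aemeasurable_quantile_restrict_Ioc μ hp hq)
    MeasurableSet.univ, preimage_univ, Measure.restrict_apply_univ, Real.volume_Ioc]

lemma integrable_qmeas_iff {f : ℝ → ℝ} (hf : Measurable f) :
    Integrable f (qmeas μ p q) ↔ IntegrableOn (fun u => f (quantile μ u)) (Ioc p q) :=
  integrable_map_measure hf.aestronglyMeasurable (aemeasurable_quantile_restrict_Ioc μ hp hq)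

lemma integral_qmeas {f : ℝ → ℝ} (hf : Measurable f) :
    ∫ x, f x ∂qmeas μ p q = ∫ u in Ioc p q, f (quantile μ u) :=
  integral_map (aemeasurable_quantile_restrict_Ioc μ hp hq) hf.aestronglyMeasurable

variable {a : ℝ} (hQ : IntegrableOn (fun u => quantile μ u - a) (Ioc p q))
include hQ

lemma integrable_qmeas_sub (b : ℝ) : Integrable (fun x => x - b) (qmeas μ p q) := by
  rw [integrable_qmeas_iff μ hp hq (f := fun x => x - b) (measurable_id.sub_const b)]
  simpa only [Pi.add_def, sub_add_sub_cancel] using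
    hQ.add (integrableOn_const (C := a - b) (by simp))

lemma integral_qmeas_sub (hpq : p ≤ q) (b : ℝ) :
    ∫ x, (x - b) ∂qmeas μ p q = (∫ u in Ioc p q, (quantile μ u - a)) + (q - p) * (a - b) := by
  rw [integral_qmeas μ hp hq (f := fun x => x - b) (measurable_id.sub_const b)]
  calc
    _ = ∫ u in Ioc p q, ((quantile μ u - a) + (a - b)) := by simp only [sub_add_sub_cancel]
    _ = _ := by
      rw [integral_add hQ (integrableOn_const (by simp)), setIntegral_const, measureReal_def,
        Real.volume_Ioc, ENNReal.toReal_ofReal (sub_nonneg.2 hpq), smul_eq_mul]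

end QuantileMeasure

theorem stmt10_general (μ : Measure ℝ) [IsProbabilityMeasure μ]
    (lb ub : ℝ) (hlb : lb < 0) (hub : 0 < ub)
    (ξ : ℝ) (hξ : ξ ∈ Ioc (distF μ lb) 1)
    (hξeq : (∫ u in Ioc (distF μ lb) ξ, (quantile μ u - lb)) = -lb)
    (hmass : 0 ≤ -lb / (ub - lb) - (ξ - distF μ lb)) :
    ((ENNReal.ofReal (-lb / (ub - lb) - (ξ - distF μ lb)) • Measure.dirac lb +
        qmeas μ (distF μ lb) ξ) univ).toReal = -lb / (ub - lb) ∧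
    (∫ x, (x - ub) ∂(ENNReal.ofReal (-lb / (ub - lb) - (ξ - distF μ lb)) •
        Measure.dirac lb + qmeas μ (distF μ lb) ξ)) = 0 := by
  set p := distF μ lb
  have hp : 0 ≤ p := ENNReal.toReal_nonneg
  obtain ⟨hpξ, hξ1⟩ := hξ
  have hQ : IntegrableOn (fun u => quantile μ u - lb) (Ioc p ξ) := by
    -- otherwise the Bochner integral in `hξeq` would be the junk value `0 ≠ -lb`
    by_contra h
    rw [integral_undef h] at hξeq
    linarith
  constructor
  · rw [Measure.add_apply, Measure.smul_apply, qmeas_univ μ hp hξ1, measure_univ, smul_eq_mul,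
      mul_one, ← ENNReal.ofReal_add hmass (by linarith), ENNReal.toReal_ofReal (by linarith)]
    ring
  · have hdirac : Integrable (fun x : ℝ => x - ub)
        (ENNReal.ofReal (-lb / (ub - lb) - (ξ - p)) • Measure.dirac lb) :=
      (integrable_dirac (by simp)).smul_measure ENNReal.ofReal_ne_top
    rw [integral_add_measure hdirac (integrable_qmeas_sub μ hp hξ1 hQ ub), integral_smul_measure,
      integral_dirac, ENNReal.toReal_ofReal hmass, integral_qmeas_sub μ hp hξ1 hQ hpξ.le ub,
      hξeq, smul_eq_mul]
    field_simp [(by linarith : ub - lb ≠ 0)]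
    ring

theorem stmt10 (μ : Measure ℝ) [IsProbabilityMeasure μ]
    (hint : Integrable id μ) (hcent : ∫ x, x ∂μ = 0)
    (lb ub : ℝ) (hlb : lb < 0) (hub : 0 < ub)
    (ξ : ℝ) (hξ : ξ ∈ Ioc (distF μ lb) 1)
    (hξeq : (∫ u in Ioc (distF μ lb) ξ, (quantile μ u - lb)) = -lb)
    (hmass : 0 ≤ -lb / (ub - lb) - (ξ - distF μ lb)) :
    ((ENNReal.ofReal (-lb / (ub - lb) - (ξ - distF μ lb)) • Measure.dirac lb +
        qmeas μ (distF μ lb) ξ) univ).toReal = -lb / (ub - lb) ∧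
    (∫ x, (x - ub) ∂(ENNReal.ofReal (-lb / (ub - lb) - (ξ - distF μ lb)) •
        Measure.dirac lb + qmeas μ (distF μ lb) ξ)) = 0 :=
  stmt10_general μ lb ub hlb hub ξ hξ hξeq hmass
end
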